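/- Let P and Q be polytopes in ℝ^d and let u be a vertex of P. Then the graph Γ_{P,Q}(u), namely the subgraph of the graph of P + Q induced on the set of vertices w of P + Q such that w = u + v for some vertex v of Q, is nonempty and connected. -/

import Mathlib

open Pointwise
open scoped RealInnerProductSpace

noncomputable section

abbrev Esp (d : ℕ) := EuclideanSpace ℝ (Fin d)

def IsPolytope {d : ℕ} (P : Set (Esp d)) : Prop :=
  ∃ s : Finset (Esp d), s.Nonempty ∧ P = convexHull ℝ (s : Set (Esp d))

def polyFace {d : ℕ} (P : Set (Esp d)) (c : Esp d) : Set (Esp d) :=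
  {x | x ∈ P ∧ ∀ y ∈ P, ⟪c, x⟫ ≤ ⟪c, y⟫}

def polyVerts {d : ℕ} (P : Set (Esp d)) : Set (Esp d) :=
  Set.extremePoints ℝ P

def f0 {d : ℕ} (P : Set (Esp d)) : ℕ := (polyVerts P).ncard

def polyAdj {d : ℕ} (P : Set (Esp d)) (u v : Esp d) : Prop :=
  u ≠ v ∧ u ∈ polyVerts P ∧ v ∈ polyVerts P ∧
    ∃ c : Esp d, polyFace P c = segment ℝ u v

def polyGraph {d : ℕ} (P : Set (Esp d)) : SimpleGraph (Esp d) where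
  Adj u v := polyAdj P u v
  symm := by
    refine ⟨?_⟩
    rintro u v ⟨hne, hu, hv, c, hc⟩
    exact ⟨hne.symm, hv, hu, c, by rw [hc, segment_symm]⟩
  loopless := by refine ⟨?_⟩; rintro u ⟨hne, -⟩; exact hne rfl

def polyDiam {d : ℕ} (P : Set (Esp d)) : ℕ :=
  sSup {n : ℕ | ∃ u ∈ polyVerts P, ∃ v ∈ polyVerts P, n = (polyGraph P).dist u v}

def polyDim {d : ℕ} (P : Set (Esp d)) : ℕ :=
  Module.finrank ℝ (affineSpan ℝ P).direction

def IsFace {d : ℕ} (P F : Set (Esp d)) : Prop := ∃ c : Esp d, polyFace P c = F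

def gammaVerts {d : ℕ} (P Q : Set (Esp d)) (u : Esp d) : Set (Esp d) :=
  {w ∈ polyVerts (P + Q) | ∃ v ∈ polyVerts Q, w = u + v}

/-!
A vertex `u + v` of `Γ_{P,Q}(u)` is exposed by a functional `c` whose minimum is attained on
`P` only at `u` and on `Q` only at `v`. The functionals exposing `u` in `P` form an open convex
cone. Given two vertices of `Γ_{P,Q}(u)` exposed by `c₁` and `c₂`, perturb `c₂` generically
inside that cone and follow the segment from `c₁` to it: along the way the set of minimizing
vertices of `Q` has at most two elements, and whenever it is a pair `{y, z}` the corresponding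
face of `P + Q` is the edge `[u + y, u + z]`. Connectedness of `[0, 1]` then links the two
vertices through such edges. For nonemptiness, a generic functional close to one exposing `u`
has a unique minimizing vertex `v` of `Q`, and `u + v` is a vertex of `P + Q`.
-/

open scoped Topology Finset

section Minimizers

variable {E : Type*} [NormedAddCommGroup E] [InnerProductSpace ℝ E]

def minimizers (V : Finset E) (c : E) : Finset E :=
  {y ∈ V | ∀ z ∈ V, ⟪c, y⟫ ≤ ⟪c, z⟫}

variable {V : Finset E} {c c' u y z : E}

theorem mem_minimizers :
    y ∈ minimizers V c ↔ y ∈ V ∧ ∀ z ∈ V, ⟪c, y⟫ ≤ ⟪c, z⟫ :=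
  Finset.mem_filter

theorem minimizers_subset : minimizers V c ⊆ V :=
  Finset.filter_subset _ _

theorem minimizers_nonempty (hV : V.Nonempty) (c : E) : (minimizers V c).Nonempty := by
  obtain ⟨y, hy, hmin⟩ := V.exists_min_image (fun y => ⟪c, y⟫) hV
  exact ⟨y, mem_minimizers.2 ⟨hy, hmin⟩⟩

theorem inner_sub_eq_zero_of_mem_minimizers (hy : y ∈ minimizers V c)
    (hz : z ∈ minimizers V c) : ⟪c, y - z⟫ = 0 := by
  rw [inner_sub_right, sub_eq_zero]
  exact le_antisymm ((mem_minimizers.1 hy).2 z (minimizers_subset hz))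
    ((mem_minimizers.1 hz).2 y (minimizers_subset hy))

theorem minimizers_eq_singleton_iff :
    minimizers V c = {u} ↔ u ∈ V ∧ ∀ y ∈ V, y ≠ u → ⟪c, u⟫ < ⟪c, y⟫ := by
  constructor
  · intro h
    have hu : u ∈ minimizers V c := h ▸ Finset.mem_singleton_self u
    refine ⟨minimizers_subset hu, fun y hy hne => lt_of_not_ge fun hle => hne ?_⟩
    have : y ∈ minimizers V c :=
      mem_minimizers.2 ⟨hy, fun z hz => hle.trans ((mem_minimizers.1 hu).2 z hz)⟩
    simpa [h] using this
  · rintro ⟨hu, hlt⟩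
    refine Finset.eq_singleton_iff_unique_mem.2
      ⟨mem_minimizers.2 ⟨hu, fun z hz => ?_⟩, fun y hy => ?_⟩
    · rcases eq_or_ne z u with rfl | hne
      exacts [le_rfl, (hlt z hz hne).le]
    · by_contra hne
      exact (hlt y (minimizers_subset hy) hne).not_ge ((mem_minimizers.1 hy).2 u hu)

theorem eventually_minimizers_eq_singleton (h : minimizers V c = {u}) :
    ∀ᶠ c' in 𝓝 c, minimizers V c' = {u} := by
  obtain ⟨hu, hlt⟩ := minimizers_eq_singleton_iff.1 h
  have hcont : ∀ x : E, Continuous fun c' : E => ⟪c', x⟫ := fun x =>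
    continuous_id.inner continuous_const
  have : ∀ᶠ c' in 𝓝 c, ∀ y ∈ V, y ≠ u → ⟪c', u⟫ < ⟪c', y⟫ := by
    simp only [Filter.eventually_all_finset, Filter.eventually_imp_distrib_left]
    exact fun y hy hne =>
      (hcont u).continuousAt.eventually_lt (hcont y).continuousAt (hlt y hy hne)
  exact this.mono fun c' hc' => minimizers_eq_singleton_iff.2 ⟨hu, hc'⟩

theorem minimizers_lineMap_eq_singleton (h : minimizers V c = {u})
    (h' : minimizers V c' = {u}) {t : ℝ} (ht : t ∈ Set.Icc (0 : ℝ) 1) :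
    minimizers V (AffineMap.lineMap c c' t) = {u} := by
  obtain ⟨hu, hlt⟩ := minimizers_eq_singleton_iff.1 h
  obtain ⟨-, hlt'⟩ := minimizers_eq_singleton_iff.1 h'
  refine minimizers_eq_singleton_iff.2 ⟨hu, fun y hy hne => ?_⟩
  have h₁ := hlt y hy hne
  have h₂ := hlt' y hy hne
  simp only [AffineMap.lineMap_apply_module, inner_add_left, real_inner_smul_left]
  rcases ht.2.lt_or_eq with ht₁ | rfl
  · nlinarith [mul_pos (sub_pos.2 ht₁) (sub_pos.2 h₁), mul_nonneg ht.1 (sub_pos.2 h₂).le]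
  · simpa using h₂

theorem isClosed_setOf_mem_minimizers {X : Type*} [TopologicalSpace X] {γ : X → E}
    (hγ : Continuous γ) (V : Finset E) (y : E) : IsClosed {t | y ∈ minimizers V (γ t)} := by
  simp only [mem_minimizers, Set.ofPred_and, Set.ofPred_forall]
  exact isClosed_const.inter <| isClosed_iInter fun z => isClosed_iInter fun _ =>
    isClosed_le (hγ.inner continuous_const) (hγ.inner continuous_const)

theorem IsPreconnected.forall_mem_minimizers_of_step [DecidableEq E] {X : Type*}
    [TopologicalSpace X] {s : Set X} (hs : IsPreconnected s) {γ : X → E} (hγ : Continuous γ)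
    (hV : V.Nonempty) (hcard : ∀ t ∈ s, #(minimizers V (γ t)) ≤ 2) {p : E → Prop}
    (hstep : ∀ t ∈ s, ∀ y z, minimizers V (γ t) = {y, z} → p y → p z) {t₀ t₁ : X}
    (ht₀ : t₀ ∈ s) (ht₁ : t₁ ∈ s) {y₀ : E} (hy₀ : y₀ ∈ minimizers V (γ t₀)) (hp₀ : p y₀) :
    ∀ y ∈ minimizers V (γ t₁), p y := by
  set A := ⋃ y ∈ {y | y ∈ V ∧ p y}, {t | y ∈ minimizers V (γ t)}
  set B := ⋃ y ∈ {y | y ∈ V ∧ ¬p y}, {t | y ∈ minimizers V (γ t)}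
  have hA : IsClosed A := (V.finite_toSet.subset fun y hy => hy.1).isClosed_biUnion
    fun y _ => isClosed_setOf_mem_minimizers hγ V y
  have hB : IsClosed B := (V.finite_toSet.subset fun y hy => hy.1).isClosed_biUnion
    fun y _ => isClosed_setOf_mem_minimizers hγ V y
  have hmemA : ∀ {t y}, y ∈ minimizers V (γ t) → p y → t ∈ A := fun hy hpy =>
    Set.mem_biUnion ⟨minimizers_subset hy, hpy⟩ hy
  have hmemB : ∀ {t y}, y ∈ minimizers V (γ t) → ¬p y → t ∈ B := fun hy hpy =>
    Set.mem_biUnion ⟨minimizers_subset hy, hpy⟩ hy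
  have hcover : s ⊆ A ∪ B := fun t _ => by
    obtain ⟨y, hy⟩ := minimizers_nonempty hV (γ t)
    by_cases hpy : p y
    exacts [Or.inl (hmemA hy hpy), Or.inr (hmemB hy hpy)]
  intro y₁ hy₁
  by_contra hp₁
  obtain ⟨t, hts, htA, htB⟩ := isPreconnected_closed_iff.1 hs A B hA hB hcover
    ⟨t₀, ht₀, hmemA hy₀ hp₀⟩ ⟨t₁, ht₁, hmemB hy₁ hp₁⟩
  simp only [A, B, Set.mem_iUnion, Set.mem_ofPred_eq] at htA htB
  obtain ⟨y, ⟨-, hpy⟩, hy⟩ := htA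
  obtain ⟨z, ⟨-, hpz⟩, hz⟩ := htB
  have hyz : y ≠ z := fun h => hpz (h ▸ hpy)
  have hpair : minimizers V (γ t) = {y, z} :=
    (Finset.eq_of_subset_of_card_le (Finset.insert_subset hy (Finset.singleton_subset_iff.2 hz))
      ((hcard t hts).trans (Finset.card_pair hyz).ge)).symm
  exact hpz (hstep t hts y z hpair hpy)

theorem exists_minimizers_eq_singleton [CompleteSpace E] {x : E}
    (hx : x ∈ (convexHull ℝ (V : Set E)).extremePoints ℝ) : ∃ c, minimizers V c = {x} := by
  classical
  have hxV : x ∈ V := extremePoints_convexHull_subset hx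
  have hsub : (↑(V.erase x) : Set E) ⊆ convexHull ℝ ↑V \ {x} := fun y hy =>
    ⟨subset_convexHull ℝ _ (Finset.mem_of_mem_erase hy), Finset.ne_of_mem_erase hy⟩
  have hsep : x ∉ convexHull ℝ ↑(V.erase x) := fun h =>
    ((convex_convexHull ℝ _).mem_extremePoints_iff_mem_sdiff_convexHull_sdiff.1 hx).2
      (convexHull_mono hsub h)
  obtain ⟨f, s, hfx, hfs⟩ := geometric_hahn_banach_point_closed (convex_convexHull ℝ _)
    ((V.erase x).finite_toSet.isCompact_convexHull (𝕜 := ℝ)).isClosed hsep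
  refine ⟨(InnerProductSpace.toDual ℝ E).symm f,
    minimizers_eq_singleton_iff.2 ⟨hxV, fun y hy hne => ?_⟩⟩
  rw [InnerProductSpace.toDual_symm_apply, InnerProductSpace.toDual_symm_apply]
  exact hfx.trans (hfs y (subset_convexHull ℝ _ (Finset.mem_erase.2 ⟨hne, hy⟩)))

end Minimizers

section Genericity

variable {E : Type*} [NormedAddCommGroup E] [InnerProductSpace ℝ E] {V : Finset E} {c c' : E}

theorem card_minimizers_le_one (hc : Set.InjOn (fun y => ⟪c, y⟫) V) :
    #(minimizers V c) ≤ 1 :=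
  Finset.card_le_one.2 fun _ hy _ hz => hc (minimizers_subset hy) (minimizers_subset hz)
    (sub_eq_zero.1 (by rw [← inner_sub_right]; exact inner_sub_eq_zero_of_mem_minimizers hy hz))

/- If three distinct points of `V` tie at `(1 - t) • c + t • c'`, then `(1 - t, t)` solves a
homogeneous 2 × 2 system whose determinant is the inner product in `htriple`. -/
theorem card_minimizers_lineMap_le_two (hc' : Set.InjOn (fun y => ⟪c', y⟫) V)
    (htriple : ∀ y₁ ∈ V, ∀ y₂ ∈ V, ∀ y₃ ∈ V, y₁ ≠ y₂ → y₁ ≠ y₃ → y₂ ≠ y₃ →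
      (⟪c, y₁ - y₃⟫ ≠ 0 ∨ ⟪c, y₁ - y₂⟫ ≠ 0) →
      ⟪c', ⟪c, y₁ - y₃⟫ • (y₁ - y₂) - ⟪c, y₁ - y₂⟫ • (y₁ - y₃)⟫ ≠ 0)
    {t : ℝ} (ht : t ≠ 0) : #(minimizers V (AffineMap.lineMap c c' t)) ≤ 2 := by
  by_contra! hcard
  obtain ⟨y₁, hy₁, y₂, hy₂, y₃, hy₃, h₁₂, h₁₃, h₂₃⟩ := Finset.two_lt_card.1 hcard
  have e₂ := inner_sub_eq_zero_of_mem_minimizers hy₁ hy₂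
  have e₃ := inner_sub_eq_zero_of_mem_minimizers hy₁ hy₃
  simp only [AffineMap.lineMap_apply_module, inner_add_left, real_inner_smul_left] at e₂ e₃
  by_cases hc : ⟪c, y₁ - y₃⟫ ≠ 0 ∨ ⟪c, y₁ - y₂⟫ ≠ 0
  · refine htriple y₁ (minimizers_subset hy₁) y₂ (minimizers_subset hy₂) y₃
      (minimizers_subset hy₃) h₁₂ h₁₃ h₂₃ hc ?_
    rw [inner_sub_right, real_inner_smul_right, real_inner_smul_right]
    refine mul_left_cancel₀ ht ?_
    linear_combination ⟪c, y₁ - y₃⟫ * e₂ - ⟪c, y₁ - y₂⟫ * e₃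
  · push Not at hc
    refine h₁₂ (hc' (minimizers_subset hy₁) (minimizers_subset hy₂) ?_)
    rw [hc.2, mul_zero, zero_add, mul_eq_zero, inner_sub_right, sub_eq_zero] at e₂
    exact e₂.resolve_left ht

theorem eventually_residual_inner_ne_zero {w : E} (hw : w ≠ 0) :
    ∀ᶠ c in residual E, ⟪c, w⟫ ≠ 0 := by
  refine residual_of_dense_open
    (isOpen_ne_fun (continuous_id.inner continuous_const) continuous_const) ?_
  have : {c : E | ⟪c, w⟫ ≠ 0} = (LinearMap.ker (innerₛₗ ℝ w) : Set E)ᶜ := by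
    ext c
    simp [real_inner_comm]
  rw [this, ← interior_eq_empty_iff_dense_compl, ← Set.not_nonempty_iff_eq_empty]
  intro h
  have hw' : w ∈ LinearMap.ker (innerₛₗ ℝ w) :=
    (Submodule.eq_top_of_nonempty_interior' _ h).symm ▸ Submodule.mem_top
  exact hw (inner_self_eq_zero.1 hw')

theorem eventually_residual_injOn_inner (V : Finset E) :
    ∀ᶠ c in residual E, Set.InjOn (fun y => ⟪c, y⟫) V := by
  simp only [Set.InjOn, Finset.mem_coe, Filter.eventually_all_finset]
  intro y _ z _
  by_cases hyz : y = z
  · exact Filter.Eventually.of_forall fun _ _ => hyz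
  · filter_upwards [eventually_residual_inner_ne_zero (sub_ne_zero.2 hyz)] with c hc h
    exact absurd (by rw [inner_sub_right, h, sub_self]) hc

theorem not_collinear_of_mem_extremePoints {A : Set E} {x y z : E}
    (hx : x ∈ A.extremePoints ℝ) (hy : y ∈ A.extremePoints ℝ) (hz : z ∈ A.extremePoints ℝ)
    (hxy : x ≠ y) (hxz : x ≠ z) (hyz : y ≠ z) : ¬Collinear ℝ {x, y, z} := by
  intro h
  rcases h.wbtw_or_wbtw_or_wbtw with h | h | h
  · rcases (mem_extremePoints_iff_forall_segment.1 hy).2 x hx.1 z hz.1 h.mem_segment with h | h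
    exacts [hxy h, hyz h.symm]
  · rcases (mem_extremePoints_iff_forall_segment.1 hz).2 y hy.1 x hx.1 h.mem_segment with h | h
    exacts [hyz h, hxz h]
  · rcases (mem_extremePoints_iff_forall_segment.1 hx).2 z hz.1 y hy.1 h.mem_segment with h | h
    exacts [hxz h.symm, hxy h.symm]

theorem smul_sub_sub_smul_sub_ne_zero {x y z : E} (h : ¬Collinear ℝ {x, y, z}) {a b : ℝ}
    (hab : a ≠ 0 ∨ b ≠ 0) : a • (x - y) - b • (x - z) ≠ 0 := by
  intro h0
  apply h
  rcases hab with ha | hb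
  · have hy : y ∈ line[ℝ, x, z] := by
      convert AffineMap.lineMap_mem_affineSpan_pair (b / a) x z using 1
      rw [AffineMap.lineMap_apply_module]
      linear_combination (norm := skip) (-a⁻¹) • h0
      match_scalars <;> field_simp <;> ring
    simpa [Set.insert_comm] using collinear_insert_of_mem_affineSpan_pair hy
  · have hz : z ∈ line[ℝ, x, y] := by
      convert AffineMap.lineMap_mem_affineSpan_pair (a / b) x y using 1
      rw [AffineMap.lineMap_apply_module]
      linear_combination (norm := skip) b⁻¹ • h0
      match_scalars <;> field_simp <;> ring
    have := collinear_insert_of_mem_affineSpan_pair hz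
    rwa [Set.insert_comm, Set.pair_comm] at this

theorem eventually_residual_card_minimizers_lineMap_le_two {A : Set E}
    (hV : ↑V ⊆ A.extremePoints ℝ) (c : E) :
    ∀ᶠ c' in residual E, ∀ t : ℝ, t ≠ 0 → #(minimizers V (AffineMap.lineMap c c' t)) ≤ 2 := by
  have htriple : ∀ᶠ c' in residual E, ∀ y₁ ∈ V, ∀ y₂ ∈ V, ∀ y₃ ∈ V,
      y₁ ≠ y₂ → y₁ ≠ y₃ → y₂ ≠ y₃ → (⟪c, y₁ - y₃⟫ ≠ 0 ∨ ⟪c, y₁ - y₂⟫ ≠ 0) →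
      ⟪c', ⟪c, y₁ - y₃⟫ • (y₁ - y₂) - ⟪c, y₁ - y₂⟫ • (y₁ - y₃)⟫ ≠ 0 := by
    simp only [Filter.eventually_all_finset, Filter.eventually_imp_distrib_left]
    intro y₁ h₁ y₂ h₂ y₃ h₃ h₁₂ h₁₃ h₂₃ hc
    exact eventually_residual_inner_ne_zero <| smul_sub_sub_smul_sub_ne_zero
      (not_collinear_of_mem_extremePoints (hV h₁) (hV h₂) (hV h₃) h₁₂ h₁₃ h₂₃) hc
  filter_upwards [eventually_residual_injOn_inner V, htriple] with c' hinj htriple t ht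
  exact card_minimizers_lineMap_le_two hinj htriple ht

end Genericity

section ExtremePoints

variable {E : Type*} [NormedAddCommGroup E] [NormedSpace ℝ E]

theorem convexHull_extremePoints_eq {K : Set E} (hK : IsCompact K) (hKc : Convex ℝ K)
    (hfin : (K.extremePoints ℝ).Finite) : convexHull ℝ (K.extremePoints ℝ) = K := by
  rw [← (hfin.isCompact_convexHull (𝕜 := ℝ)).isClosed.closure_eq]
  exact closure_convexHull_extremePoints hK hKc

theorem right_mem_extremePoints_segment {a b : E} (hab : a ≠ b) :
    b ∈ (segment ℝ a b).extremePoints ℝ := by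
  by_contra hb
  have hsub : (segment ℝ a b).extremePoints ℝ ⊆ {a} := fun x hx => by
    rw [← convexHull_pair] at hx
    rcases extremePoints_convexHull_subset hx with rfl | rfl
    exacts [rfl, absurd (convexHull_pair (𝕜 := ℝ) a x ▸ hx) hb]
  have hK := convexHull_extremePoints_eq (convexHull_pair (𝕜 := ℝ) a b ▸
    (Set.toFinite {a, b}).isCompact_convexHull (𝕜 := ℝ)) (convex_segment a b)
    ((Set.finite_singleton a).subset hsub)
  have hba : b ∈ convexHull ℝ {a} :=
    convexHull_mono hsub (hK.symm ▸ right_mem_segment ℝ a b)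
  rw [convexHull_singleton] at hba
  exact hab hba.symm

end ExtremePoints

section Polytope

variable {d : ℕ} {P Q : Set (Esp d)} {c u v w y z : Esp d}

theorem isExposed_polyFace (P : Set (Esp d)) (c : Esp d) : IsExposed ℝ P (polyFace P c) := by
  refine fun _ => ⟨-innerSL ℝ c, ?_⟩
  ext x
  simp [polyFace]

theorem isClosed_polyFace (hP : IsClosed P) (c : Esp d) : IsClosed (polyFace P c) := by
  simp only [polyFace, Set.ofPred_and, Set.ofPred_forall]
  exact hP.inter <| isClosed_iInter fun y => isClosed_iInter fun _ =>
    isClosed_le (continuous_const.inner continuous_id) continuous_const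

theorem polyFace_add (P Q : Set (Esp d)) (c : Esp d) :
    polyFace (P + Q) c = polyFace P c + polyFace Q c := by
  ext x
  constructor
  · rintro ⟨hx, hmin⟩
    obtain ⟨p, hp, q, hq, rfl⟩ := Set.mem_add.1 hx
    refine ⟨p, ⟨hp, fun p' hp' => ?_⟩, q, ⟨hq, fun q' hq' => ?_⟩, rfl⟩
    · have := hmin (p' + q) (Set.add_mem_add hp' hq)
      rw [inner_add_right, inner_add_right] at this
      linarith
    · have := hmin (p + q') (Set.add_mem_add hp hq')
      rw [inner_add_right, inner_add_right] at this
      linarith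
  · rintro ⟨p, ⟨hp, hpmin⟩, q, ⟨hq, hqmin⟩, rfl⟩
    refine ⟨Set.add_mem_add hp hq, fun y hy => ?_⟩
    obtain ⟨p', hp', q', hq', rfl⟩ := Set.mem_add.1 hy
    rw [inner_add_right, inner_add_right]
    exact add_le_add (hpmin p' hp') (hqmin q' hq')

theorem mem_polyFace_of_add_mem (hu : u ∈ P) (hv : v ∈ Q) (h : u + v ∈ polyFace (P + Q) c) :
    u ∈ polyFace P c ∧ v ∈ polyFace Q c := by
  refine ⟨⟨hu, fun p hp => ?_⟩, ⟨hv, fun q hq => ?_⟩⟩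
  · have := h.2 (p + v) (Set.add_mem_add hp hv)
    simp only [inner_add_right] at this
    linarith
  · have := h.2 (u + q) (Set.add_mem_add hu hq)
    simp only [inner_add_right] at this
    linarith

theorem polyFace_convexHull (V : Finset (Esp d)) (c : Esp d) :
    polyFace (convexHull ℝ ↑V) c = convexHull ℝ ↑(minimizers V c) := by
  set K := convexHull ℝ (V : Set (Esp d))
  have hexp := isExposed_polyFace K c
  have hconv : Convex ℝ (polyFace K c) := hexp.convex (convex_convexHull ℝ _)
  have hext : (polyFace K c).extremePoints ℝ ⊆ V := fun x hx =>
    extremePoints_convexHull_subset (hexp.isExtreme.extremePoints_subset_extremePoints hx)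
  have hmin : ↑(minimizers V c) ⊆ polyFace K c := fun y hy =>
    ⟨subset_convexHull ℝ _ (minimizers_subset hy), fun x hx =>
      convexHull_min (fun z hz => (mem_minimizers.1 hy).2 z hz)
        (convex_halfSpace_ge (innerₛₗ ℝ c).isLinear _) hx⟩
  refine subset_antisymm ?_ (convexHull_min hmin hconv)
  have hK : IsCompact K := V.finite_toSet.isCompact_convexHull (𝕜 := ℝ)
  have hF : IsCompact (polyFace K c) :=
    hK.of_isClosed_subset (isClosed_polyFace hK.isClosed c) fun x hx => hx.1
  rw [← convexHull_extremePoints_eq hF hconv (V.finite_toSet.subset hext)]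
  refine convexHull_mono fun x hx => mem_minimizers.2 ⟨hext hx, fun z hz => ?_⟩
  exact (extremePoints_subset hx).2 z (subset_convexHull ℝ _ hz)

namespace IsPolytope

theorem isCompact (hP : IsPolytope P) : IsCompact P := by
  obtain ⟨s, -, rfl⟩ := hP
  exact s.finite_toSet.isCompact_convexHull (𝕜 := ℝ)

theorem convex (hP : IsPolytope P) : Convex ℝ P := by
  obtain ⟨s, -, rfl⟩ := hP
  exact convex_convexHull ℝ _

theorem finite_polyVerts (hP : IsPolytope P) : (polyVerts P).Finite := by
  obtain ⟨s, -, rfl⟩ := hP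
  exact s.finite_toSet.subset extremePoints_convexHull_subset

theorem convexHull_polyVerts (hP : IsPolytope P) : convexHull ℝ (polyVerts P) = P :=
  convexHull_extremePoints_eq hP.isCompact hP.convex hP.finite_polyVerts

theorem add (hP : IsPolytope P) (hQ : IsPolytope Q) : IsPolytope (P + Q) := by
  obtain ⟨s, hs, rfl⟩ := hP
  obtain ⟨t, ht, rfl⟩ := hQ
  exact ⟨s + t, hs.add ht, by rw [Finset.coe_add, convexHull_add]⟩

def vertices (hP : IsPolytope P) : Finset (Esp d) := hP.finite_polyVerts.toFinset

theorem coe_vertices (hP : IsPolytope P) : (hP.vertices : Set (Esp d)) = polyVerts P :=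
  hP.finite_polyVerts.coe_toFinset

theorem mem_vertices (hP : IsPolytope P) : y ∈ hP.vertices ↔ y ∈ polyVerts P :=
  hP.finite_polyVerts.mem_toFinset

theorem vertices_nonempty (hP : IsPolytope P) : hP.vertices.Nonempty := by
  have hne : P.Nonempty := by
    obtain ⟨s, hs, rfl⟩ := id hP
    exact (Finset.coe_nonempty.2 hs).convexHull
  rwa [← Finset.coe_nonempty, hP.coe_vertices, ← convexHull_nonempty_iff (𝕜 := ℝ),
    hP.convexHull_polyVerts]

theorem polyFace_eq_convexHull_minimizers (hP : IsPolytope P) (c : Esp d) :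
    polyFace P c = convexHull ℝ ↑(minimizers hP.vertices c) := by
  conv_lhs => rw [← hP.convexHull_polyVerts, ← hP.coe_vertices]
  exact polyFace_convexHull _ c

theorem polyFace_eq_singleton_iff (hP : IsPolytope P) :
    polyFace P c = {u} ↔ minimizers hP.vertices c = {u} := by
  rw [hP.polyFace_eq_convexHull_minimizers]
  refine ⟨fun h => ?_, fun h => by rw [h, Finset.coe_singleton, convexHull_singleton]⟩
  have hsub : ↑(minimizers hP.vertices c) ⊆ ({u} : Set (Esp d)) :=
    h ▸ subset_convexHull ℝ _
  exact Finset.eq_singleton_iff_nonempty_unique_mem.2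
    ⟨minimizers_nonempty hP.vertices_nonempty c, fun x hx => hsub hx⟩

theorem polyFace_eq_segment [DecidableEq (Esp d)] (hP : IsPolytope P)
    (h : minimizers hP.vertices c = {y, z}) : polyFace P c = segment ℝ y z := by
  rw [hP.polyFace_eq_convexHull_minimizers, h, Finset.coe_pair, convexHull_pair]

theorem exists_polyFace_eq_singleton (hP : IsPolytope P) (hw : w ∈ polyVerts P) :
    ∃ c, polyFace P c = {w} := by
  rw [← hP.convexHull_polyVerts, ← hP.coe_vertices] at hw
  obtain ⟨c, hc⟩ := exists_minimizers_eq_singleton hw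
  exact ⟨c, hP.polyFace_eq_singleton_iff.2 hc⟩

end IsPolytope

theorem exists_polyFace_eq_singleton_of_add_mem_polyVerts (hP : IsPolytope P)
    (hQ : IsPolytope Q) (hu : u ∈ P) (hv : v ∈ Q) (h : u + v ∈ polyVerts (P + Q)) :
    ∃ c, polyFace P c = {u} ∧ polyFace Q c = {v} := by
  obtain ⟨c, hc⟩ := (hP.add hQ).exists_polyFace_eq_singleton h
  obtain ⟨huF, hvF⟩ := mem_polyFace_of_add_mem hu hv (by rw [hc]; rfl)
  have hsum : polyFace P c + polyFace Q c = {u + v} := polyFace_add P Q c ▸ hc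
  refine ⟨c, Set.eq_singleton_iff_unique_mem.2 ⟨huF, fun p hp => ?_⟩,
    Set.eq_singleton_iff_unique_mem.2 ⟨hvF, fun q hq => ?_⟩⟩
  · exact add_right_cancel (hsum.subset (Set.add_mem_add hp hvF))
  · exact add_left_cancel (hsum.subset (Set.add_mem_add huF hq))

theorem add_mem_polyVerts_add (hu : polyFace P c = {u}) (hv : polyFace Q c = {v}) :
    u + v ∈ polyVerts (P + Q) := by
  have h : polyFace (P + Q) c = {u + v} := by
    rw [polyFace_add, hu, hv, Set.singleton_add_singleton]
  exact isExtreme_singleton.1 (h ▸ (isExposed_polyFace (P + Q) c).isExtreme)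

theorem polyAdj_add (hu : polyFace P c = {u}) (hyz : polyFace Q c = segment ℝ y z)
    (hne : y ≠ z) : polyAdj (P + Q) (u + y) (u + z) := by
  have h : polyFace (P + Q) c = segment ℝ (u + y) (u + z) := by
    rw [polyFace_add, hu, hyz, Set.singleton_add, segment_translate_image]
  have hext := h ▸ (isExposed_polyFace (P + Q) c).isExtreme
  have hne' : u + y ≠ u + z := fun h' => hne (add_left_cancel h')
  refine ⟨hne', hext.extremePoints_subset_extremePoints ?_,
    hext.extremePoints_subset_extremePoints (right_mem_extremePoints_segment hne'), c, h⟩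
  rw [segment_symm]
  exact right_mem_extremePoints_segment hne'.symm

theorem gammaVerts_nonempty (hP : IsPolytope P) (hQ : IsPolytope Q) (hu : u ∈ polyVerts P) :
    (gammaVerts P Q u).Nonempty := by
  obtain ⟨c₀, hc₀⟩ := hP.exists_polyFace_eq_singleton hu
  obtain ⟨c, hinj, hcP⟩ :=
    (dense_of_mem_residual (eventually_residual_injOn_inner hQ.vertices)).inter_nhds_nonempty
      (eventually_minimizers_eq_singleton (hP.polyFace_eq_singleton_iff.1 hc₀))
  obtain ⟨v, hv⟩ := Finset.card_eq_one.1 <| le_antisymm (card_minimizers_le_one hinj)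
    (minimizers_nonempty hQ.vertices_nonempty c).card_pos
  refine ⟨u + v, add_mem_polyVerts_add (hP.polyFace_eq_singleton_iff.2 hcP)
    (hQ.polyFace_eq_singleton_iff.2 hv), v, ?_, rfl⟩
  exact hQ.mem_vertices.1 (minimizers_subset (hv ▸ Finset.mem_singleton_self v))

theorem exists_minimizers_of_mem_gammaVerts (hP : IsPolytope P) (hQ : IsPolytope Q)
    (hu : u ∈ polyVerts P) (hw : w ∈ gammaVerts P Q u) :
    ∃ v c, w = u + v ∧ minimizers hP.vertices c = {u} ∧ minimizers hQ.vertices c = {v} := by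
  obtain ⟨hw, v, hv, rfl⟩ := hw
  obtain ⟨c, hcP, hcQ⟩ := exists_polyFace_eq_singleton_of_add_mem_polyVerts hP hQ hu.1 hv.1 hw
  exact ⟨v, c, rfl, hP.polyFace_eq_singleton_iff.1 hcP, hQ.polyFace_eq_singleton_iff.1 hcQ⟩

theorem preconnected_induce_gammaVerts (hP : IsPolytope P) (hQ : IsPolytope Q)
    (hu : u ∈ polyVerts P) : ((polyGraph (P + Q)).induce (gammaVerts P Q u)).Preconnected := by
  classical
  set G := (polyGraph (P + Q)).induce (gammaVerts P Q u)
  rintro ⟨w₁, hw₁⟩ ⟨w₂, hw₂⟩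
  obtain ⟨v₁, c₁, rfl, hc₁P, hc₁Q⟩ := exists_minimizers_of_mem_gammaVerts hP hQ hu hw₁
  obtain ⟨v₂, c₂, rfl, hc₂P, hc₂Q⟩ := exists_minimizers_of_mem_gammaVerts hP hQ hu hw₂
  have hgeneric :=
    eventually_residual_card_minimizers_lineMap_le_two hQ.coe_vertices.subset c₁
  obtain ⟨c, hcard, hcP, hcQ⟩ := (dense_of_mem_residual hgeneric).inter_nhds_nonempty
    ((eventually_minimizers_eq_singleton hc₂P).and (eventually_minimizers_eq_singleton hc₂Q))
  set γ : ℝ →ᵃ[ℝ] Esp d := AffineMap.lineMap c₁ c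
  have hcard' : ∀ t ∈ Set.Icc (0 : ℝ) 1, #(minimizers hQ.vertices (γ t)) ≤ 2 := by
    intro t _
    rcases eq_or_ne t 0 with rfl | ht
    · simp [γ, hc₁Q]
    · exact hcard t ht
  have hstep : ∀ t ∈ Set.Icc (0 : ℝ) 1, ∀ y z, minimizers hQ.vertices (γ t) = {y, z} →
      (∃ h, G.Reachable ⟨u + v₁, hw₁⟩ ⟨u + y, h⟩) → ∃ h, G.Reachable ⟨u + v₁, hw₁⟩ ⟨u + z, h⟩ := by
    rintro t ht y z hyz ⟨hy, hr⟩
    rcases eq_or_ne y z with rfl | hne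
    · exact ⟨hy, hr⟩
    have hadj := polyAdj_add
      (hP.polyFace_eq_singleton_iff.2 (minimizers_lineMap_eq_singleton hc₁P hcP ht))
      (hQ.polyFace_eq_segment hyz) hne
    have hzQ : z ∈ minimizers hQ.vertices (γ t) := by simp [hyz]
    have hz : u + z ∈ gammaVerts P Q u :=
      ⟨hadj.2.2.1, z, hQ.mem_vertices.1 (minimizers_subset hzQ), rfl⟩
    exact ⟨hz, hr.trans (show G.Adj ⟨u + y, hy⟩ ⟨u + z, hz⟩ from hadj).reachable⟩
  obtain ⟨_, hr⟩ := isPreconnected_Icc.forall_mem_minimizers_of_step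
    AffineMap.lineMap_continuous hQ.vertices_nonempty hcard' hstep ⟨le_rfl, zero_le_one⟩
    ⟨zero_le_one, le_rfl⟩ (y₀ := v₁) (by simp [hc₁Q]) ⟨hw₁, .rfl⟩ v₂ (by simp [hcQ])
  exact hr

end Polytope

theorem stmt15 {d : ℕ} (P Q : Set (Esp d)) (hP : IsPolytope P) (hQ : IsPolytope Q)
    (u : Esp d) (hu : u ∈ polyVerts P) :
    (gammaVerts P Q u).Nonempty ∧
      ((polyGraph (P + Q)).induce (gammaVerts P Q u)).Connected := by
  have hne := gammaVerts_nonempty hP hQ hu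
  exact ⟨hne, (SimpleGraph.connected_iff _).2
    ⟨preconnected_induce_gammaVerts hP hQ hu, hne.to_subtype⟩⟩
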